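/- Let M be a positive definite lattice containing a distinguished element 𝔬₁. If 𝔬₂ is another distinguished element of M, then there is an isometry f ∈ O(M) (a bilinear-form-preserving ℤ-linear automorphism of M) such that f(𝔬₁) = 𝔬₂. -/

import Mathlib

/-!
For distinguished `𝔬` and any `x`, the vector `(𝔬.x) 𝔬 - 3 x` lies in `⟨𝔬⟩⊥` and has norm
`3 (3 (x.x) - (𝔬.x)²)`, so evenness of `⟨𝔬⟩⊥` gives `(x.x) ≡ (𝔬.x) mod 2`. For two distinguished
elements this makes `a = (𝔬₁.𝔬₂)` odd and `(𝔬₁ - 𝔬₂ . x)` even for every `x`, while Cauchy–Schwarz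
gives `|a| ≤ 3`. Replacing `𝔬₂` by `-𝔬₂` and composing with `-1`, we may take `a ∈ {1, 3}`.
If `a = 3` then `𝔬₁ = 𝔬₂`; if `a = 1` then `𝔬₁ - 𝔬₂` has norm `4` and even pairing with all of
`M`, so the reflection in it is an integral isometry, and it sends `𝔬₁` to `𝔬₂`.
-/

namespace LinearMap.BilinForm

theorem eq_of_apply_self_eq_apply {R M : Type*} [CommRing R] [LinearOrder R]
    [IsStrictOrderedRing R] [AddCommGroup M] [Module R M] {B : LinearMap.BilinForm R M}
    (hp : ∀ z, z ≠ 0 → 0 < B z z) (hB : B.IsSymm) {x y : M} (hx : B x x = B x y)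
    (hy : B y y = B x y) : x = y := by
  by_contra hne
  have := hp (x - y) (sub_ne_zero.2 hne)
  simp only [map_sub, LinearMap.sub_apply, hB.eq y x] at this
  linarith

variable {M : Type*} [AddCommGroup M] [Module ℤ M] (B : LinearMap.BilinForm ℤ M)

def IsDistinguished (o : M) : Prop :=
  B o o = 3 ∧ ∀ x, B x o = 0 → Even (B x x)

variable {B}

namespace IsDistinguished

variable {o o₁ o₂ : M}

theorem neg (ho : IsDistinguished B o) : IsDistinguished B (-o) :=
  ⟨by simpa using ho.1, fun x hx => ho.2 x (by simpa using hx)⟩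

theorem even_apply_self_iff (ho : IsDistinguished B o) (hB : B.IsSymm) (x : M) :
    Even (B x x) ↔ Even (B o x) := by
  have heven : Even (B o o * (B o o * B x x - B o x * B x o)) := by
    rw [← apply_smul_sub_smul_sub_eq]
    refine ho.2 _ ?_
    simp [hB.eq x o, mul_comm]
  rw [ho.1, hB.eq x o] at heven
  have h3 : ¬Even (3 : ℤ) := by decide
  simpa [Int.even_mul, Int.even_sub, h3] using heven

variable (h₁ : IsDistinguished B o₁) (h₂ : IsDistinguished B o₂) (hB : B.IsSymm)
include h₁ h₂ hB

theorem odd_apply : Odd (B o₁ o₂) := by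
  rw [← Int.not_even_iff_odd, ← h₁.even_apply_self_iff hB, h₂.1]
  decide

theorem even_apply_sub (x : M) : Even (B (o₁ - o₂) x) := by
  rw [map_sub, LinearMap.sub_apply, Int.even_sub, ← h₁.even_apply_self_iff hB,
    ← h₂.even_apply_self_iff hB]

theorem apply_eq_one_or_three (hp : ∀ z, z ≠ 0 → 0 < B z z) (ha : 0 < B o₁ o₂) :
    B o₁ o₂ = 1 ∨ B o₁ o₂ = 3 := by
  have hnonneg (z : M) : 0 ≤ B z z := by
    rcases eq_or_ne z 0 with rfl | hz
    · simp
    · exact (hp z hz).le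
  have hcs := B.apply_sq_le_of_symm hnonneg (isSymm_iff.1 hB) o₁ o₂
  rw [h₁.1, h₂.1] at hcs
  have hle : B o₁ o₂ ≤ 3 := by nlinarith
  obtain ⟨k, hk⟩ := h₁.odd_apply h₂ hB
  omega

theorem apply_sub_sub_eq_four (ha : B o₁ o₂ = 1) : B (o₁ - o₂) (o₁ - o₂) = 4 := by
  simp only [map_sub, LinearMap.sub_apply, h₁.1, h₂.1, hB.eq o₂ o₁, ha]
  norm_num

theorem isReflective_sub (ha : B o₁ o₂ = 1) : IsReflective B (o₁ - o₂) := by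
  have h4 := h₁.apply_sub_sub_eq_four h₂ hB ha
  refine ⟨h4 ▸ IsRegular.of_ne_zero (by norm_num), fun y => ?_⟩
  obtain ⟨k, hk⟩ := h₁.even_apply_sub h₂ hB y
  exact ⟨k, by rw [h4, hk]; ring⟩

theorem exists_isOrthogonal_apply_eq_of_apply_eq_one (ha : B o₁ o₂ = 1) :
    ∃ f : M ≃ₗ[ℤ] M, B.IsOrthogonal f ∧ f o₁ = o₂ := by
  have hv := h₁.isReflective_sub h₂ hB ha
  refine ⟨Module.reflection (hv.coroot_apply_self B),
    hv.isOrthogonal_reflection B (isSymm_iff.1 hB), ?_⟩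
  have hcoroot : hv.coroot B o₁ = 1 := by
    have h := hv.apply_self_mul_coroot_apply B (y := o₁)
    rw [h₁.apply_sub_sub_eq_four h₂ hB ha, map_sub, LinearMap.sub_apply, h₁.1, hB.eq o₂ o₁,
      ha] at h
    omega
  rw [Module.reflection_apply, hcoroot]
  module

theorem exists_isOrthogonal_apply_eq_of_pos (hp : ∀ z, z ≠ 0 → 0 < B z z)
    (ha : 0 < B o₁ o₂) : ∃ f : M ≃ₗ[ℤ] M, B.IsOrthogonal f ∧ f o₁ = o₂ := by
  rcases h₁.apply_eq_one_or_three h₂ hB hp ha with h | h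
  · exact h₁.exists_isOrthogonal_apply_eq_of_apply_eq_one h₂ hB h
  · exact ⟨LinearEquiv.refl ℤ M, fun _ _ => rfl,
      eq_of_apply_self_eq_apply hp hB (h₁.1.trans h.symm) (h₂.1.trans h.symm)⟩

theorem exists_isOrthogonal_apply_eq (hp : ∀ z, z ≠ 0 → 0 < B z z) :
    ∃ f : M ≃ₗ[ℤ] M, B.IsOrthogonal f ∧ f o₁ = o₂ := by
  have hne : B o₁ o₂ ≠ 0 := by
    obtain ⟨k, hk⟩ := h₁.odd_apply h₂ hB
    omega
  rcases hne.lt_or_gt with hneg | hpos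
  · obtain ⟨f, hf, hfo⟩ :=
      h₁.exists_isOrthogonal_apply_eq_of_pos h₂.neg hB hp (by simpa using hneg)
    exact ⟨f.trans (LinearEquiv.neg ℤ), fun x y => by simpa using hf x y, by simp [hfo]⟩
  · exact h₁.exists_isOrthogonal_apply_eq_of_pos h₂ hB hp hpos

end IsDistinguished

end LinearMap.BilinForm

theorem exists_isometry_mapping_distinguished
    {M : Type*} [AddCommGroup M] [Module ℤ M]
    (B : M →ₗ[ℤ] M →ₗ[ℤ] ℤ)
    (hsymm : ∀ x y : M, B x y = B y x)
    (hpos : ∀ x : M, x ≠ 0 → 0 < B x x)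
    (o₁ o₂ : M)
    (ho₁ : B o₁ o₁ = 3) (ho₁Even : ∀ x : M, B x o₁ = 0 → Even (B x x))
    (ho₂ : B o₂ o₂ = 3) (ho₂Even : ∀ x : M, B x o₂ = 0 → Even (B x x)) :
    ∃ f : M ≃ₗ[ℤ] M, (∀ x y : M, B (f x) (f y) = B x y) ∧ f o₁ = o₂ :=
  LinearMap.BilinForm.IsDistinguished.exists_isOrthogonal_apply_eq (B := B) ⟨ho₁, ho₁Even⟩
    ⟨ho₂, ho₂Even⟩ ⟨hsymm⟩ hpos
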